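/- (Lemma 4.1) Let p ∈ (1,∞), let k : ℝ → ℝ be nonnegative and nondecreasing, and let c ∈ ℝ. Then the vector field T(ξ) = k(|ξ| − c) |ξ|^{p−2} ξ is monotone on ℝ^ℓ: for all ξ, ξ' ∈ ℝ^ℓ, (T(ξ) − T(ξ'))·(ξ − ξ') ≥ 0. -/

import Mathlib

open scoped RealInnerProductSpace

open Set

/-!
Write `T(ξ) = g(|ξ|) ξ` with `g(s) = k(s - c) s^{p-2} ≥ 0`. By Cauchy–Schwarz,
`(g(|ξ|) ξ - g(|ξ'|) ξ')·(ξ - ξ') ≥ (g(|ξ|)|ξ| - g(|ξ'|)|ξ'|)(|ξ| - |ξ'|)`,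
and the right side is nonnegative because `s ↦ g(s) s = k(s - c) s^{p-1}` is a product of two
nonnegative nondecreasing functions on `[0, ∞)`.
-/

theorem MonotoneOn.sub_mul_sub_nonneg {R : Type*} [Ring R] [LinearOrder R] [IsStrictOrderedRing R]
    {f : R → R} {s : Set R} (hf : MonotoneOn f s) {a b : R} (ha : a ∈ s) (hb : b ∈ s) :
    0 ≤ (f a - f b) * (a - b) := by
  rcases le_total a b with hab | hab
  · exact mul_nonneg_of_nonpos_of_nonpos (sub_nonpos.2 (hf ha hb hab)) (sub_nonpos.2 hab)
  · exact mul_nonneg (sub_nonneg.2 (hf hb ha hab)) (sub_nonneg.2 hab)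

section InnerProductSpace

variable {E : Type*} [NormedAddCommGroup E] [InnerProductSpace ℝ E]

theorem mul_norm_sub_mul_norm_mul_sub_le_inner (x y : E) {a b : ℝ} (hab : 0 ≤ a + b) :
    (a * ‖x‖ - b * ‖y‖) * (‖x‖ - ‖y‖) ≤ ⟪a • x - b • y, x - y⟫ := by
  have expand : ⟪a • x - b • y, x - y⟫ = a * ‖x‖ ^ 2 + b * ‖y‖ ^ 2 - (a + b) * ⟪x, y⟫ := by
    simp only [inner_sub_left, inner_sub_right, real_inner_smul_left,
      real_inner_self_eq_norm_sq, real_inner_comm x y]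
    ring
  rw [expand]
  nlinarith [mul_le_mul_of_nonneg_left (real_inner_le_norm x y) hab]

theorem inner_smul_norm_sub_smul_norm_nonneg {g : ℝ → ℝ} (hg : ∀ s, 0 ≤ s → 0 ≤ g s)
    (hmono : MonotoneOn (fun s => g s * s) (Ici 0)) (x y : E) :
    0 ≤ ⟪g ‖x‖ • x - g ‖y‖ • y, x - y⟫ :=
  (hmono.sub_mul_sub_nonneg (norm_nonneg x) (norm_nonneg y)).trans <|
    mul_norm_sub_mul_norm_mul_sub_le_inner x y <|
      add_nonneg (hg _ (norm_nonneg x)) (hg _ (norm_nonneg y))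

end InnerProductSpace

theorem Real.rpow_sub_two_mul_self {p s : ℝ} (hp : 1 < p) (hs : 0 ≤ s) :
    s ^ (p - 2) * s = s ^ (p - 1) := by
  rw [← Real.rpow_add_one' hs (by linarith)]
  ring_nf

theorem monotoneOn_comp_sub_mul_rpow {k : ℝ → ℝ} (hk_nonneg : ∀ s, 0 ≤ k s)
    (hk_mono : Monotone k) (c : ℝ) {q : ℝ} (hq : 0 ≤ q) :
    MonotoneOn (fun s => k (s - c) * s ^ q) (Ici 0) :=
  MonotoneOn.mul (fun _ _ _ _ h => hk_mono (sub_le_sub_right h c))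
    (Real.monotoneOn_rpow_Ici_of_exponent_nonneg hq) (fun _ _ => hk_nonneg _)
    (fun _ hs => Real.rpow_nonneg hs q)

/-- Lemma 4.1: for `p ∈ (1,∞)`, `k : ℝ → ℝ` nonnegative and nondecreasing
and `c ∈ ℝ`, the vector field `T(ξ) = k(|ξ| - c)|ξ|^{p-2}ξ` is monotone on `ℝ^ℓ`. -/
theorem monotone_penalized_field (ℓ : ℕ) (p : ℝ) (hp : 1 < p)
    (k : ℝ → ℝ) (hk_nonneg : ∀ s, 0 ≤ k s) (hk_mono : Monotone k) (c : ℝ)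
    (ξ ξ' : EuclideanSpace ℝ (Fin ℓ)) :
    0 ≤ ⟪(k (‖ξ‖ - c) * ‖ξ‖ ^ (p - 2)) • ξ - (k (‖ξ'‖ - c) * ‖ξ'‖ ^ (p - 2)) • ξ',
        ξ - ξ'⟫ := by
  have hmono : MonotoneOn (fun s => k (s - c) * s ^ (p - 2) * s) (Ici 0) := by
    refine (monotoneOn_comp_sub_mul_rpow hk_nonneg hk_mono c (sub_nonneg.2 hp.le)).congr ?_
    intro s hs
    dsimp only
    rw [mul_assoc, Real.rpow_sub_two_mul_self hp hs]
  exact inner_smul_norm_sub_smul_norm_nonneg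
    (fun s hs => mul_nonneg (hk_nonneg _) (Real.rpow_nonneg hs _)) hmono ξ ξ'
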